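/- arXiv:1911.00047 — 2 statements merged into one kernel-verified Lean document; each statement's English description precedes it below -/
import Mathlib

section
/- Let p ≥ 1 be real, and let F : [0,v₀] → ℝ be nonnegative, differentiable, with F'(t) ≤ C·F(t) + p·F(t)^((p-1)/p)·g(t) for all t, where C ≥ 0 and g : [0,v₀] → ℝ is continuous and nonnegative. Then F(v)^(1/p) ≤ e^(C v / p) · ( F(0)^(1/p) + ∫₀^v g(s) ds ) for all v ∈ [0,v₀]. -/
/-! The regularized root `u = (F + ε) ^ (1 / p)` is differentiable even where `F` vanishes, and
since `F ^ ((p - 1) / p) ≤ (F + ε) ^ ((p - 1) / p)` the hypothesis turns into the linear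
differential inequality `u' ≤ (C / p) u + g`. With the integrating factor `exp (-C t / p)`,
`exp (-C t / p) u t - ∫₀ᵗ exp (-C s / p) g s` is antitone, which bounds `u`; then let `ε → 0`. -/

open Real Set intervalIntegral

section LinearDifferentialInequality

variable {u u' g : ℝ → ℝ} {K a b : ℝ}

theorem antitoneOn_exp_neg_mul_mul_sub_integral (hu : ContinuousOn u (Icc a b))
    (hu' : ∀ t ∈ Ioo a b, HasDerivAt u (u' t) t) (hg : ContinuousOn g (Icc a b))
    (hle : ∀ t ∈ Ioo a b, u' t ≤ K * u t + g t) :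
    AntitoneOn (fun t => exp (-(K * t)) * u t - ∫ s in a..t, exp (-(K * s)) * g s)
      (Icc a b) := by
  rcases lt_or_ge b a with hba | hab
  · exact fun x hx => absurd (hx.1.trans hx.2) hba.not_ge
  have hw : ContinuousOn (fun s => exp (-(K * s)) * g s) (Icc a b) := by fun_prop
  refine antitoneOn_of_hasDerivWithinAt_nonpos (convex_Icc a b) ?_
    (f' := fun t => exp (-(K * t)) * (u' t - K * u t - g t)) ?_ ?_
  · refine ((Continuous.continuousOn (by fun_prop)).mul hu).sub ?_
    exact (continuousOn_primitive_interval' (hw.intervalIntegrable_of_Icc hab)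
      left_mem_uIcc).mono Icc_subset_uIcc
  · intro t ht
    rw [interior_Icc] at ht
    have hexp : HasDerivAt (fun t => exp (-(K * t))) (exp (-(K * t)) * -K) t := by
      simpa using ((hasDerivAt_id t).const_mul K).neg.exp
    have hint : HasDerivAt (fun t => ∫ s in a..t, exp (-(K * s)) * g s)
        (exp (-(K * t)) * g t) t :=
      integral_hasDerivAt_right ((hw.mono (Icc_subset_Icc_right ht.2.le)).intervalIntegrable_of_Icc
        ht.1.le) ((hw.mono Ioo_subset_Icc_self).stronglyMeasurableAtFilter isOpen_Ioo t ht)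
        (hw.continuousAt (Icc_mem_nhds ht.1 ht.2))
    exact (((hexp.mul (hu' t ht)).sub hint).congr_deriv (by ring)).hasDerivWithinAt
  · intro t ht
    rw [interior_Icc] at ht
    have := hle t ht
    exact mul_nonpos_of_nonneg_of_nonpos (exp_pos _).le (by linarith)

theorem le_exp_mul_mul_add_integral_of_deriv_le (hK : 0 ≤ K) (hu : ContinuousOn u (Icc a b))
    (hu' : ∀ t ∈ Ioo a b, HasDerivAt u (u' t) t) (hg : ContinuousOn g (Icc a b))
    (hg0 : ∀ t ∈ Icc a b, 0 ≤ g t) (hle : ∀ t ∈ Ioo a b, u' t ≤ K * u t + g t) :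
    ∀ t ∈ Icc a b, u t ≤ exp (K * (t - a)) * (u a + ∫ s in a..t, g s) := by
  intro t ht
  have hH := antitoneOn_exp_neg_mul_mul_sub_integral hu hu' hg hle
    (left_mem_Icc.2 (ht.1.trans ht.2)) ht ht.1
  simp only [integral_same, sub_zero] at hH
  have hgt : ContinuousOn g (Icc a t) := hg.mono (Icc_subset_Icc_right ht.2)
  have hweight : ∫ s in a..t, exp (-(K * s)) * g s ≤ exp (-(K * a)) * ∫ s in a..t, g s := by
    rw [← integral_const_mul]
    refine integral_mono_on ht.1 (ContinuousOn.intervalIntegrable_of_Icc ht.1 (by fun_prop))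
      (ContinuousOn.intervalIntegrable_of_Icc ht.1 (by fun_prop)) fun s hs => ?_
    have : K * a ≤ K * s := mul_le_mul_of_nonneg_left hs.1 hK
    exact mul_le_mul_of_nonneg_right (exp_le_exp.2 (by linarith))
      (hg0 s ⟨hs.1, hs.2.trans ht.2⟩)
  calc u t = exp (K * t) * (exp (-(K * t)) * u t) := by
        rw [← mul_assoc, ← exp_add, add_neg_cancel, exp_zero, one_mul]
    _ ≤ exp (K * t) * (exp (-(K * a)) * (u a + ∫ s in a..t, g s)) :=
        mul_le_mul_of_nonneg_left (by linarith) (exp_pos _).le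
    _ = exp (K * (t - a)) * (u a + ∫ s in a..t, g s) := by
        rw [← mul_assoc, ← exp_add]
        ring_nf

end LinearDifferentialInequality

theorem mul_rpow_one_div_sub_one_le {p C x y d g : ℝ} (hp : 1 ≤ p) (hC : 0 ≤ C) (hg : 0 ≤ g)
    (hx : 0 ≤ x) (hxy : x ≤ y) (hy : 0 < y) (hd : d ≤ C * x + p * x ^ ((p - 1) / p) * g) :
    d * (1 / p) * y ^ (1 / p - 1) ≤ C / p * y ^ (1 / p) + g := by
  have hlin : x * y ^ (1 / p - 1) ≤ y ^ (1 / p) := by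
    calc x * y ^ (1 / p - 1) ≤ y * y ^ (1 / p - 1) := by gcongr
      _ = y ^ (1 / p) := by rw [rpow_sub_one hy.ne', mul_div_cancel₀ _ hy.ne']
  have hroot : x ^ ((p - 1) / p) * y ^ (1 / p - 1) ≤ 1 := by
    calc x ^ ((p - 1) / p) * y ^ (1 / p - 1) ≤ y ^ ((p - 1) / p) * y ^ (1 / p - 1) := by
          gcongr
      _ = 1 := by
          rw [← rpow_add hy, show (p - 1) / p + (1 / p - 1) = 0 by field_simp; ring, rpow_zero]
  calc d * (1 / p) * y ^ (1 / p - 1)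
      ≤ (C * x + p * x ^ ((p - 1) / p) * g) * (1 / p) * y ^ (1 / p - 1) := by gcongr
    _ = C / p * (x * y ^ (1 / p - 1)) + x ^ ((p - 1) / p) * y ^ (1 / p - 1) * g := by
        field_simp
    _ ≤ C / p * y ^ (1 / p) + 1 * g := by gcongr
    _ = C / p * y ^ (1 / p) + g := by rw [one_mul]

theorem add_rpow_one_div_le_of_deriv_le {p C v₀ ε : ℝ} {F g : ℝ → ℝ} (hp : 1 ≤ p)
    (hC : 0 ≤ C) (hε : 0 < ε) (hF0 : ∀ t ∈ Icc 0 v₀, 0 ≤ F t)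
    (hFdiff : ∀ t ∈ Icc 0 v₀, DifferentiableAt ℝ F t) (hg : ContinuousOn g (Icc 0 v₀))
    (hg0 : ∀ t ∈ Icc 0 v₀, 0 ≤ g t)
    (hineq : ∀ t ∈ Icc 0 v₀, deriv F t ≤ C * F t + p * F t ^ ((p - 1) / p) * g t) :
    ∀ v ∈ Icc 0 v₀,
      (F v + ε) ^ (1 / p) ≤ exp (C / p * v) * ((F 0 + ε) ^ (1 / p) + ∫ s in 0..v, g s) := by
  have hpos : ∀ t ∈ Icc 0 v₀, 0 < F t + ε := fun t ht => by linarith [hF0 t ht]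
  have hderiv : ∀ t ∈ Icc 0 v₀, HasDerivAt (fun t => (F t + ε) ^ (1 / p))
      (deriv F t * (1 / p) * (F t + ε) ^ (1 / p - 1)) t := fun t ht =>
    ((hFdiff t ht).hasDerivAt.add_const ε).rpow_const (.inl (hpos t ht).ne')
  have hle : ∀ t ∈ Icc 0 v₀, deriv F t * (1 / p) * (F t + ε) ^ (1 / p - 1) ≤
      C / p * (F t + ε) ^ (1 / p) + g t := fun t ht =>
    mul_rpow_one_div_sub_one_le hp hC (hg0 t ht) (hF0 t ht) (by linarith) (hpos t ht) (hineq t ht)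
  intro v hv
  simpa only [sub_zero] using le_exp_mul_mul_add_integral_of_deriv_le
    (div_nonneg hC (by linarith)) (fun t ht => (hderiv t ht).continuousAt.continuousWithinAt)
    (fun t ht => hderiv t (Ioo_subset_Icc_self ht)) hg hg0
    (fun t ht => hle t (Ioo_subset_Icc_self ht)) v hv

/-- Abstract ODE form of the transport `L^p` estimate: if `F ≥ 0` is differentiable
with `F' ≤ C F + p F^((p-1)/p) g` on `[0, v₀]`, where `C ≥ 0` and `g` is continuous
and nonnegative, then `F(v)^(1/p) ≤ exp(C v / p) (F(0)^(1/p) + ∫₀^v g)`. -/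
theorem transport_Lp_ode_estimate
    (p C v₀ : ℝ) (hp : 1 ≤ p) (hC : 0 ≤ C) (F g : ℝ → ℝ)
    (hF0 : ∀ t ∈ Set.Icc 0 v₀, 0 ≤ F t)
    (hFdiff : ∀ t ∈ Set.Icc 0 v₀, DifferentiableAt ℝ F t)
    (hg : ContinuousOn g (Set.Icc 0 v₀))
    (hg0 : ∀ t ∈ Set.Icc 0 v₀, 0 ≤ g t)
    (hineq : ∀ t ∈ Set.Icc 0 v₀,
      deriv F t ≤ C * F t + p * F t ^ ((p - 1) / p) * g t) :
    ∀ v ∈ Set.Icc 0 v₀,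
      F v ^ (1 / p) ≤ Real.exp (C * v / p) * (F 0 ^ (1 / p) + ∫ s in (0:ℝ)..v, g s) := by
  intro v hv
  have hexp : 0 ≤ 1 / p := one_div_nonneg.2 (by linarith)
  have hcont :
      Continuous fun ε => exp (C / p * v) * ((F 0 + ε) ^ (1 / p) + ∫ s in 0..v, g s) := by
    fun_prop (disch := exact hexp)
  rw [mul_div_right_comm]
  refine ge_of_tendsto ((hcont.tendsto' 0 _ (by simp)).mono_left (nhdsWithin_le_nhds (s := Ioi 0)))
    (eventually_nhdsWithin_of_forall fun ε hε => ?_)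
  exact (rpow_le_rpow (hF0 v hv) (by linarith [mem_Ioi.1 hε]) hexp).trans
    (add_rpow_one_div_le_of_deriv_le hp hC hε hF0 hFdiff hg hg0 hineq v hv)
end

section
/- Let u : ℝ² → ℝ be a compactly supported C¹ function. Then ‖u‖_{L²(ℝ²)} ≤ C ‖∇u‖_{L¹(ℝ²)} for an absolute constant C (in fact C = 1 works: ‖u‖_{L²} ≤ ‖∂₁u‖_{L¹}^{1/2} ‖∂₂u‖_{L¹}^{1/2} ≤ ‖∇u‖_{L¹}). -/
/-!
Along a coordinate line through `x`, the fundamental theorem of calculus bounds `‖u x‖` by the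
integral of `‖Du‖` over that line, because the coordinate vectors have Euclidean norm `1`.
Raising these `n` bounds to the power `1 / (n - 1)`, multiplying them and integrating, the
grid-lines lemma `MeasureTheory.lintegral_prod_lintegral_pow_le` gives
`∫ ‖u‖ ^ (n / (n - 1)) ≤ (∫ ‖Du‖) ^ (n / (n - 1))` with constant `1`; for `n = 2` this is
`‖u‖_{L²}² ≤ ‖Du‖_{L¹}²`.
-/

open MeasureTheory Function ENNReal

variable {F : Type*} [NormedAddCommGroup F] [NormedSpace ℝ F]

theorem enorm_le_mul_lintegral_fderiv_line {E : Type*} [NormedAddCommGroup E] [NormedSpace ℝ E]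
    {u : E → F} (hu : ContDiff ℝ 1 u) (h2u : HasCompactSupport u) {v : E} (hv : v ≠ 0)
    (x : E) (s : ℝ) :
    ‖u (x + s • v)‖ₑ ≤ ‖v‖ₑ * ∫⁻ t : ℝ, ‖fderiv ℝ u (x + t • v)‖ₑ := by
  set γ : ℝ → E := fun t => x + t • v
  have hγ (t : ℝ) : HasDerivAt γ v t := by
    simpa only [id, one_smul] using ((hasDerivAt_id t).smul_const v).const_add x
  have hγ_emb : Topology.IsClosedEmbedding γ :=
    (Homeomorph.addLeft x).isClosedEmbedding.comp (isClosedEmbedding_smul_left hv)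
  calc ‖(u ∘ γ) s‖ₑ
      ≤ ∫⁻ t in Set.Iic s, ‖deriv (u ∘ γ) t‖ₑ :=
        HasCompactSupport.enorm_le_lintegral_Ici_deriv
          (hu.comp (contDiff_const.add (contDiff_id.smul contDiff_const)))
          (h2u.comp_isClosedEmbedding hγ_emb) s
    _ ≤ ∫⁻ t, ‖fderiv ℝ u (γ t) v‖ₑ := by
        refine lintegral_mono' Measure.restrict_le_self fun t => ?_
        rw [fderiv_comp_deriv _ (hu.differentiable one_ne_zero _) (hγ t).differentiableAt,
          (hγ t).deriv]
    _ ≤ ∫⁻ t, ‖fderiv ℝ u (γ t)‖ₑ * ‖v‖ₑ :=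
        lintegral_mono fun t => ContinuousLinearMap.le_opENorm _ _
    _ = ‖v‖ₑ * ∫⁻ t, ‖fderiv ℝ u (x + t • v)‖ₑ := by
        rw [lintegral_mul_const' _ _ enorm_ne_top, mul_comm]

namespace EuclideanSpace

variable {ι : Type*} [Fintype ι]

theorem enorm_le_lintegral_fderiv_update [DecidableEq ι] {u : EuclideanSpace ℝ ι → F}
    (hu : ContDiff ℝ 1 u) (h2u : HasCompactSupport u) (y : ι → ℝ) (i : ι) :
    ‖u (WithLp.toLp 2 y)‖ₑ ≤ ∫⁻ t, ‖fderiv ℝ u (WithLp.toLp 2 (update y i t))‖ₑ := by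
  have hline (t : ℝ) : WithLp.toLp 2 (update y i t) =
      WithLp.toLp 2 (update y i 0) + t • EuclideanSpace.single i 1 := by
    ext j
    by_cases j = i <;> simp [*]
  simpa [← hline, enorm_eq_nnnorm, PiLp.nnnorm_single] using
    enorm_le_mul_lintegral_fderiv_line hu h2u (v := EuclideanSpace.single i 1) (by simp)
      (WithLp.toLp 2 (update y i 0)) (y i)

theorem lintegral_pow_le_pow_lintegral_fderiv {p : ℝ}
    (hp : Real.HolderConjugate (Fintype.card ι) p)
    {u : EuclideanSpace ℝ ι → F} (hu : ContDiff ℝ 1 u) (h2u : HasCompactSupport u) :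
    ∫⁻ x, ‖u x‖ₑ ^ p ≤ (∫⁻ x, ‖fderiv ℝ u x‖ₑ) ^ p := by
  classical
  have hmp := PiLp.volume_preserving_toLp ι
  have hemb := (MeasurableEquiv.toLp 2 (ι → ℝ)).measurableEmbedding
  rw [← hmp.lintegral_comp_emb hemb, ← hmp.lintegral_comp_emb hemb]
  calc ∫⁻ y, ‖u (WithLp.toLp 2 y)‖ₑ ^ p
      = ∫⁻ y, ∏ _i : ι, ‖u (WithLp.toLp 2 y)‖ₑ ^ (1 / (Fintype.card ι - 1 : ℝ)) := by
        congr! 2 with y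
        rw [Finset.prod_const, Finset.card_univ, ← rpow_natCast, ← rpow_mul, hp.conjugate_eq]
        field_simp
    _ ≤ ∫⁻ y, ∏ i, (∫⁻ t, ‖fderiv ℝ u (WithLp.toLp 2 (update y i t))‖ₑ) ^
          (1 / (Fintype.card ι - 1 : ℝ)) := by
        gcongr with y i
        · exact div_nonneg zero_le_one (sub_nonneg.2 hp.lt.le)
        · exact enorm_le_lintegral_fderiv_update hu h2u y i
    _ ≤ (∫⁻ y, ‖fderiv ℝ u (WithLp.toLp 2 y)‖ₑ) ^ p :=
        lintegral_prod_lintegral_pow_le (fun _ => volume) hp (by fun_prop)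

end EuclideanSpace

/-- Gagliardo–Nirenberg–Sobolev inequality in dimension 2 with `p = 1` (so `p* = 2`),
with constant `C = 1`: for a compactly supported `C¹` function `u : ℝ² → ℝ`,
`‖u‖_{L²} ≤ ‖∇u‖_{L¹}`. -/
theorem gagliardo_nirenberg_sobolev_dim_two
    (u : EuclideanSpace ℝ (Fin 2) → ℝ)
    (hu : ContDiff ℝ 1 u) (hsupp : HasCompactSupport u) :
    Real.sqrt (∫ x, u x ^ 2) ≤ ∫ x, ‖fderiv ℝ u x‖ := by
  have hDu : Continuous (fderiv ℝ u) := hu.continuous_fderiv one_ne_zero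
  have hfin : ∫⁻ x, ‖fderiv ℝ u x‖ₑ ≠ ∞ :=
    (hDu.integrable_of_hasCompactSupport (hsupp.fderiv (𝕜 := ℝ))).hasFiniteIntegral.ne
  have hgns : ∫⁻ x, ‖u x‖ₑ ^ 2 ≤ (∫⁻ x, ‖fderiv ℝ u x‖ₑ) ^ 2 := by
    have := EuclideanSpace.lintegral_pow_le_pow_lintegral_fderiv (p := 2)
      (by simpa using Real.HolderConjugate.two_two) hu hsupp
    simpa only [rpow_two] using this
  have hsq : ∫ x, u x ^ 2 = (∫⁻ x, ‖u x‖ₑ ^ 2).toReal := by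
    rw [integral_eq_lintegral_of_nonneg_ae (.of_forall fun x => sq_nonneg _)
      (hu.continuous.pow 2).aestronglyMeasurable]
    refine congrArg ENNReal.toReal (lintegral_congr fun x => ?_)
    rw [← sq_abs, ofReal_pow (abs_nonneg _), Real.enorm_eq_ofReal_abs]
  rw [Real.sqrt_le_iff, integral_norm_eq_lintegral_enorm hDu.aestronglyMeasurable, hsq,
    ← toReal_pow]
  exact ⟨toReal_nonneg, toReal_mono (pow_ne_top hfin) hgns⟩
end
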